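/- Let A be a consistent layered automaton over a finite alphabet Σ that is in normal form, centralised and safe minimal. Then for every x ≥ 2, every state p in layer x admits a central sequence. -/

import Mathlib

open scoped Classical

noncomputable section

/-! ### Infinite words and the parity condition -/

/-- The minimal value occurring infinitely often in a sequence of priorities;
for (eventually) bounded sequences this is the `liminf`. -/
def minInfOften (pi : ℕ → ℕ) : ℕ := sInf {x : ℕ | ∀ N : ℕ, ∃ n : ℕ, N ≤ n ∧ pi n = x}

/-- The (min-)parity acceptance condition: the liminf of the priorities is even. -/
def ParityAccept (pi : ℕ → ℕ) : Prop := Even (minInfOften pi)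

/-- Prepend a finite word to an infinite word. -/
def prependW {α : Type} (u : List α) (w : ℕ → α) : ℕ → α := fun i =>
  if h : i < u.length then u.get ⟨i, h⟩ else w (i - u.length)

/-- The prefix of length `n` of an infinite word, as a list. -/
def wordPrefix {α : Type} (w : ℕ → α) (n : ℕ) : List α := List.ofFn (fun i : Fin n => w i)

/-- Drop the first `n` letters of an infinite word. -/
def wordDrop {α : Type} (w : ℕ → α) (n : ℕ) : ℕ → α := fun i => w (n + i)

/-- The periodic infinite word `v^ω` (junk if `v = []`). -/
def perWord {α : Type} [Inhabited α] (v : List α) : ℕ → α := fun i => v.getD (i % v.length) default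

/-! ### Layered automata -/

/-- A layered automaton over the alphabet `α` with `d` layers.  The (disjoint) layers
are encoded by the function `layer : Q → [1,d]`; each layer is a deterministic
transition system (partial transition function `δ`, which stays inside the layer);
`μ` sends each state of layer `x+1` to its parent in layer `x` (and is the identity
on layer `1`) and is a morphism of transition systems; layer `1` is complete, carries
the initial state, and all its states are reachable from the initial state. -/
structure Layered (Q α : Type) (d : ℕ) where
  layer : Q → ℕ
  layer_pos : ∀ q, 1 ≤ layer q
  layer_le : ∀ q, layer q ≤ d
  δ : Q → α → Option Q
  δ_layer : ∀ q a q', δ q a = some q' → layer q' = layer q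
  μ : Q → Q
  μ_layer : ∀ q, 1 < layer q → layer (μ q) + 1 = layer q
  μ_id : ∀ q, layer q = 1 → μ q = q
  μ_morph : ∀ q a q', 1 < layer q → δ q a = some q' → δ (μ q) a = some (μ q')
  init : Q
  init_layer : layer init = 1
  complete1 : ∀ q a, layer q = 1 → (δ q a).isSome = true
  reach1 : ∀ q, layer q = 1 →
    Relation.ReflTransGen (fun p p' => layer p = 1 ∧ ∃ a, δ p a = some p') init q

namespace Layered

variable {Q R α : Type} {d d' : ℕ}

/-- The run of the (deterministic) layer transition systems on a finite word. -/
def runList (A : Layered Q α d) : Q → List α → Option Q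
  | q, [] => some q
  | q, a :: u =>
    match A.δ q a with
    | some q' => runList A q' u
    | none => none

/-- `μ̂_x q`: the ancestor of `q` in layer `x` (image under the composed morphisms). -/
def muHat (A : Layered Q α d) (x : ℕ) (q : Q) : Q := (A.μ)^[A.layer q - x] q

/-- A leaf state: a state that is not in the image of any of the morphisms `μ_x`. -/
def IsLeaf (A : Layered Q α d) (q : Q) : Prop := ∀ p, 1 < A.layer p → A.μ p ≠ q

/-- `layer(q,a)`: the largest layer `x ≤ layer q` in which `δ_x (μ̂_x q) a` is defined. -/
def layerOf (A : Layered Q α d) (q : Q) (a : α) : ℕ :=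
  Nat.findGreatest (fun x => (A.δ (A.muHat x q) a).isSome = true) (A.layer q)

/-- A state `p` is an ancestor of `q`. -/
def IsAncestor (A : Layered Q α d) (p q : Q) : Prop :=
  A.layer p ≤ A.layer q ∧ A.muHat (A.layer p) q = p

/-! #### Safe languages and strong acceptance -/

/-- Membership of a finite word in the `x`-safe language of `q`. -/
def SafeFin (A : Layered Q α d) (x : ℕ) (q : Q) (u : List α) : Prop :=
  (A.runList (A.muHat x q) u).isSome = true

/-- Membership of an infinite word in the `x`-safe language of `q`. -/
def SafeInf (A : Layered Q α d) (x : ℕ) (q : Q) (w : ℕ → α) : Prop :=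
  ∀ n : ℕ, A.SafeFin x q (wordPrefix w n)

/-- `w` is strongly accepted by the state `p` (which lies in the even layer `x = layer p`):
`w` is `x`-safe from `p` and no decomposition `w = u·w'` admits a state `p'` of layer `x+1`
with a `u`-run from `p` to the parent of `p'` in `T_x` such that `w'` is `(x+1)`-safe from `p'`. -/
def StronglyAcc (A : Layered Q α d) (p : Q) (w : ℕ → α) : Prop :=
  Even (A.layer p) ∧ A.SafeInf (A.layer p) p w ∧
  ∀ (n : ℕ) (p' : Q), A.layer p' = A.layer p + 1 →
    A.runList p (wordPrefix w n) = some (A.μ p') →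
    ¬ A.SafeInf (A.layer p') p' (wordDrop w n)

/-- `w` is strongly rejected by `p` (lying in an odd layer). -/
def StronglyRej (A : Layered Q α d) (p : Q) (w : ℕ → α) : Prop :=
  Odd (A.layer p) ∧ A.SafeInf (A.layer p) p w ∧
  ∀ (n : ℕ) (p' : Q), A.layer p' = A.layer p + 1 →
    A.runList p (wordPrefix w n) = some (A.μ p') →
    ¬ A.SafeInf (A.layer p') p' (wordDrop w n)

/-- Consistency: no two states with the same layer-1 ancestor strongly accept
resp. strongly reject a common infinite word. -/
def Consistent (A : Layered Q α d) : Prop :=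
  ¬ ∃ (p p' : Q) (w : ℕ → α), A.muHat 1 p = A.muHat 1 p' ∧
      A.StronglyAcc p w ∧ A.StronglyRej p' w

/-- `w` is ultimately safe in layer `x`, for the automaton started in the
layer-1 state `q0`. -/
def UltSafeFrom (A : Layered Q α d) (q0 : Q) (x : ℕ) (w : ℕ → α) : Prop :=
  ∃ (n : ℕ) (p : Q), A.layer p = x ∧
    A.runList q0 (wordPrefix w n) = some (A.muHat 1 p) ∧
    A.SafeInf x p (wordDrop w n)

/-- Layered acceptance from `q0`: the maximal layer in which `w` is ultimately safe is even. -/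
def LayeredAcceptFrom (A : Layered Q α d) (q0 : Q) (w : ℕ → α) : Prop :=
  ∃ x : ℕ, Even x ∧ A.UltSafeFrom q0 x w ∧ ∀ y : ℕ, A.UltSafeFrom q0 y w → y ≤ x

/-- Layered rejection from `q0`: the maximal layer in which `w` is ultimately safe is odd. -/
def LayeredRejectFrom (A : Layered Q α d) (q0 : Q) (w : ℕ → α) : Prop :=
  ∃ x : ℕ, Odd x ∧ A.UltSafeFrom q0 x w ∧ ∀ y : ℕ, A.UltSafeFrom q0 y w → y ≤ x

/-! #### The semantics automaton `⟦A⟧` (a simple-by-priorities alternating parity automaton) -/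

/-- The priority of the letter `a` in the state `q` of `⟦A⟧`. -/
def semPrio (A : Layered Q α d) (q : Q) (a : α) : ℕ := A.layerOf q a

/-- The transitions of `⟦A⟧` (between leaf states): `q —a→ q'` iff, for
`x = layer(q,a)`, we have `δ_x (μ̂_x q) a = μ̂_x q'`; the transition carries priority `x`. -/
def semStep (A : Layered Q α d) (q : Q) (a : α) (q' : Q) : Prop :=
  A.IsLeaf q' ∧ A.δ (A.muHat (A.layerOf q a) q) a = some (A.muHat (A.layerOf q a) q')

/-- Runs of `⟦A⟧` over the infinite word `w`, starting in `p`. -/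
def IsSemRun (A : Layered Q α d) (w : ℕ → α) (p : Q) (ρ : ℕ → Q) : Prop :=
  ρ 0 = p ∧ ∀ i : ℕ, A.semStep (ρ i) (w i) (ρ (i + 1))

/-- The sequence of priorities produced by a run of `⟦A⟧` over `w`. -/
def runPrios (A : Layered Q α d) (w : ℕ → α) (ρ : ℕ → Q) : ℕ → ℕ :=
  fun i => A.semPrio (ρ i) (w i)

/-- A resolver for Eve in `⟦A⟧`: given the history (the finite run so far, as a list of
(state, letter) pairs), the current state and a letter of odd priority, it picks a successor. -/
def EveResolver (A : Layered Q α d) (σ : List (Q × α) → Q → α → Q) : Prop :=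
  ∀ (h : List (Q × α)) (q : Q) (a : α), Odd (A.semPrio q a) → A.semStep q a (σ h q a)

/-- A resolver for Adam in `⟦A⟧` (resolving the even-priority steps). -/
def AdamResolver (A : Layered Q α d) (τ : List (Q × α) → Q → α → Q) : Prop :=
  ∀ (h : List (Q × α)) (q : Q) (a : α), Even (A.semPrio q a) → A.semStep q a (τ h q a)

/-- A run is consistent with the Eve-resolver `σ`: every odd-priority step follows `σ`. -/
def ConsEve (A : Layered Q α d) (σ : List (Q × α) → Q → α → Q) (w : ℕ → α) (ρ : ℕ → Q) : Prop :=
  ∀ i : ℕ, Odd (A.semPrio (ρ i) (w i)) →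
    ρ (i + 1) = σ (List.ofFn fun j : Fin i => (ρ (j : ℕ), w (j : ℕ))) (ρ i) (w i)

/-- A run is consistent with the Adam-resolver `τ`: every even-priority step follows `τ`. -/
def ConsAdam (A : Layered Q α d) (τ : List (Q × α) → Q → α → Q) (w : ℕ → α) (ρ : ℕ → Q) : Prop :=
  ∀ i : ℕ, Even (A.semPrio (ρ i) (w i)) →
    ρ (i + 1) = τ (List.ofFn fun j : Fin i => (ρ (j : ℕ), w (j : ℕ))) (ρ i) (w i)

/-- Acceptance of `w` by `⟦A⟧` from the (leaf) state `p`: Eve has a winning strategy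
in the game `G(⟦A⟧,w)`, i.e. a resolver all of whose consistent runs satisfy parity. -/
def SemAccept (A : Layered Q α d) (p : Q) (w : ℕ → α) : Prop :=
  ∃ σ : List (Q × α) → Q → α → Q, A.EveResolver σ ∧
    ∀ ρ : ℕ → Q, A.IsSemRun w p ρ → A.ConsEve σ w ρ → ParityAccept (A.runPrios w ρ)

/-- Uniform semantic determinism: leaf states with the same layer-1 ancestor
recognise the same language in `⟦A⟧`. -/
def UnifSD (A : Layered Q α d) : Prop :=
  ∀ p q : Q, A.IsLeaf p → A.IsLeaf q → A.muHat 1 p = A.muHat 1 q →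
    ∀ w : ℕ → α, (A.SemAccept p w ↔ A.SemAccept q w)

/-! #### Longest suffix resolvers -/

/-- `v` is a suffix-witness to `r`: the layer of `r` has a run labelled `v` ending in `r`. -/
def suffixReaches (A : Layered Q α d) (r : Q) (v : List α) : Prop :=
  ∃ p : Q, A.layer p = A.layer r ∧ A.runList p v = some r

/-- The length of the longest suffix `v` of `u` such that the layer of `r` has a
run labelled `v` ending in `r`. -/
def longestSuffixLen (A : Layered Q α d) (u : List α) (r : Q) : ℕ :=
  Nat.findGreatest (fun k => k ≤ u.length ∧ A.suffixReaches r (u.drop (u.length - k))) u.length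

/-- A longest suffix resolver for Eve, initialised to `u0`: a valid Eve-resolver that,
at a step of odd priority `x` after having read `v`, moves to an `a`-successor `q'`
maximising the length of the longest `(x+1)`-suffix of `u0·v·a` to `μ̂_{x+1} q'`. -/
def IsLongestSuffixResolverE (A : Layered Q α d) (u0 : List α)
    (σ : List (Q × α) → Q → α → Q) : Prop :=
  A.EveResolver σ ∧
  ∀ (h : List (Q × α)) (q : Q) (a : α), Odd (A.semPrio q a) →
    ∀ q' : Q, A.semStep q a q' →
      A.longestSuffixLen (u0 ++ h.map Prod.snd ++ [a]) (A.muHat (A.semPrio q a + 1) q') ≤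
      A.longestSuffixLen (u0 ++ h.map Prod.snd ++ [a]) (A.muHat (A.semPrio q a + 1) (σ h q a))

/-- A longest suffix resolver for Adam, initialised to `u0` (symmetric, for even priorities). -/
def IsLongestSuffixResolverA (A : Layered Q α d) (u0 : List α)
    (τ : List (Q × α) → Q → α → Q) : Prop :=
  A.AdamResolver τ ∧
  ∀ (h : List (Q × α)) (q : Q) (a : α), Even (A.semPrio q a) →
    ∀ q' : Q, A.semStep q a q' →
      A.longestSuffixLen (u0 ++ h.map Prod.snd ++ [a]) (A.muHat (A.semPrio q a + 1) q') ≤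
      A.longestSuffixLen (u0 ++ h.map Prod.snd ++ [a]) (A.muHat (A.semPrio q a + 1) (τ h q a))

/-! #### The random walk on `⟦A⟧` -/

/-- The uniform step probability of the random walk of `⟦A⟧`. -/
def stepProb (A : Layered Q α d) (q : Q) (a : α) (q' : Q) : ENNReal :=
  if A.semStep q a q' then ((Nat.card {p : Q // A.semStep q a p} : ENNReal))⁻¹ else 0

/-- `m` is the Markov measure of the random walk of `⟦A⟧` over the word `w` started at `p`:
a probability measure on `ℕ → Q` whose cylinder probabilities are the products of the
uniform step probabilities. -/
def IsWalkMeasure [MeasurableSpace Q] (A : Layered Q α d) (w : ℕ → α) (p : Q)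
    (m : MeasureTheory.Measure (ℕ → Q)) : Prop :=
  MeasureTheory.IsProbabilityMeasure m ∧
  ∀ (n : ℕ) (s : Fin (n + 1) → Q),
    m {ρ : ℕ → Q | ∀ i : Fin (n + 1), ρ (i : ℕ) = s i} =
      (if s 0 = p then 1 else 0) *
        ∏ i : Fin n, A.stepProb (s i.castSucc) (w (i : ℕ)) (s i.succ)

/-! #### Normal form, centrality, safe minimality, central sequences -/

/-- Normal form: (N1) every layer `x ≥ 2` is a union of non-trivial SCCs, and
(N2) the safe language of every child is strictly smaller than that of its parent. -/
def NormalForm (A : Layered Q α d) : Prop :=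
  ∀ q : Q, 2 ≤ A.layer q →
    (∀ (u : List α) (q' : Q), A.runList q u = some q' →
      ∃ v : List α, v ≠ [] ∧ A.runList q' v = some q) ∧
    (∀ p : Q, 1 < A.layer p → A.μ p = q →
      ∃ u : List α, (A.runList q u).isSome = true ∧ A.runList p u = none)

/-- Inclusion of `x`-safe languages. -/
def SafeLE (A : Layered Q α d) (x : ℕ) (p q : Q) : Prop :=
  (∀ u : List α, A.SafeFin x p u → A.SafeFin x q u) ∧
  (∀ w : ℕ → α, A.SafeInf x p w → A.SafeInf x q w)

/-- Centralised: siblings (same parent) whose safe languages are included,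
lie in the same SCC of their layer. -/
def Centralised (A : Layered Q α d) : Prop :=
  ∀ p q : Q, 2 ≤ A.layer p → A.layer q = A.layer p →
    A.muHat (A.layer p - 1) p = A.muHat (A.layer p - 1) q →
    A.SafeLE (A.layer p) p q →
    (∃ u : List α, A.runList p u = some q) ∧ (∃ v : List α, A.runList q v = some p)

/-- `L(p) = L(q)`: all leaves above (the layer-1 ancestor of) `p` and all leaves above `q`
recognise the same language in `⟦A⟧`. -/
def LangEq1 (A : Layered Q α d) (p q : Q) : Prop :=
  ∀ l l' : Q, A.IsLeaf l → A.IsLeaf l' → A.muHat 1 l = A.muHat 1 p →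
    A.muHat 1 l' = A.muHat 1 q → ∀ w : ℕ → α, (A.SemAccept l w ↔ A.SemAccept l' w)

/-- The equivalence `p ≈_x q`: language equivalence together with equality of all
`y`-safe languages for `2 ≤ y ≤ x`. -/
def ApproxEq (A : Layered Q α d) (x : ℕ) (p q : Q) : Prop :=
  A.LangEq1 p q ∧ ∀ y : ℕ, 2 ≤ y → y ≤ x →
    ((∀ u : List α, A.SafeFin y p u ↔ A.SafeFin y q u) ∧
     (∀ w : ℕ → α, A.SafeInf y p w ↔ A.SafeInf y q w))

/-- Safe minimality: `≈_x`-equivalent states of the same layer are equal. -/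
def SafeMinimal (A : Layered Q α d) : Prop :=
  ∀ p q : Q, A.layer p = A.layer q → A.ApproxEq (A.layer p) p q → p = q

/-- `z` is a central sequence for the state `p` (of layer `x = layer p`). -/
def IsCentralSeq (A : Layered Q α d) (p : Q) (z : List α) : Prop :=
  z ≠ [] ∧ A.runList p z = some p ∧
  (∀ q : Q, A.layer q = A.layer p →
    A.muHat (A.layer p - 1) q = A.muHat (A.layer p - 1) p →
    (A.runList q z = some p ∨ A.runList q z = none)) ∧
  (∀ q' : Q, A.layer q' = A.layer p + 1 →
    A.muHat (A.layer p - 1) q' = A.muHat (A.layer p - 1) p →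
    A.runList q' z = none)

end Layered

/-! ### Morphisms of layered automata -/

/-- A morphism of layered automata. -/
structure IsLayMorphism {Q R α : Type} {d d' : ℕ} (A : Layered Q α d) (B : Layered R α d')
    (φ : Q → R) : Prop where
  map_init : φ A.init = B.init
  map_step : ∀ q a q', A.δ q a = some q' → B.δ (φ q) a = some (φ q')
  map_anc : ∀ p q, A.IsAncestor p q → B.IsAncestor (φ p) (φ q)

/-- A strong morphism of layered automata additionally preserves non-transitions. -/
def IsStrongLayMorphism {Q R α : Type} {d d' : ℕ} (A : Layered Q α d) (B : Layered R α d')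
    (φ : Q → R) : Prop :=
  IsLayMorphism A B φ ∧ ∀ q a, A.δ q a = none → B.δ (φ q) a = none

/-- An isomorphism of layered automata: a bijection on states that restricts to
isomorphisms of the layer transition systems, preserves the initial state, and
commutes with the morphisms `μ`. -/
structure IsLayIso {Q R α : Type} {d d' : ℕ} (A : Layered Q α d) (B : Layered R α d')
    (φ : Q ≃ R) : Prop where
  map_layer : ∀ q, B.layer (φ q) = A.layer q
  map_init : φ A.init = B.init
  map_mu : ∀ q, φ (A.μ q) = B.μ (φ q)
  map_step : ∀ q a, (A.δ q a).map φ = B.δ (φ q) a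

/-- `L(⟦A⟧) = L(⟦B⟧)`: the semantics automata (with any choice of initial leaf states
above the respective initial states) accept the same infinite words. -/
def SemLangEq {Q R α : Type} {d d' : ℕ} (A : Layered Q α d) (B : Layered R α d') : Prop :=
  ∀ (p : Q) (q : R), A.IsLeaf p → A.muHat 1 p = A.init → B.IsLeaf q → B.muHat 1 q = B.init →
    ∀ w : ℕ → α, (A.SemAccept p w ↔ B.SemAccept q w)

/-! ### Deterministic parity automata -/

/-- A deterministic parity automaton over `α` with priorities in `[1,d]`. -/
structure DPA (Q α : Type) (d : ℕ) where
  init : Q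
  next : Q → α → Q
  prio : Q → α → ℕ
  prio_pos : ∀ q a, 1 ≤ prio q a
  prio_le : ∀ q a, prio q a ≤ d

namespace DPA

variable {Q α : Type} {d : ℕ}

/-- The unique run of a DPA on an infinite word. -/
def run (B : DPA Q α d) (w : ℕ → α) : ℕ → Q
  | 0 => B.init
  | n + 1 => B.next (run B w n) (w n)

/-- Acceptance by a DPA: the priorities along the unique run satisfy parity. -/
def Accepts (B : DPA Q α d) (w : ℕ → α) : Prop :=
  ParityAccept (fun i => B.prio (B.run w i) (w i))

end DPA

/-- `L` is ω-regular: recognised by some deterministic parity automaton. -/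
def IsOmegaRegular {α : Type} (L : Set (ℕ → α)) : Prop :=
  ∃ (n d : ℕ) (B : DPA (Fin n) α d), ∀ w : ℕ → α, w ∈ L ↔ B.Accepts w

/-! ### Nondeterministic coBüchi automata -/

/-- A (complete) nondeterministic coBüchi automaton: transitions carry priorities in `{1,2}`. -/
structure NCA (Q α : Type) where
  init : Q
  trans : Q → α → ℕ → Q → Prop
  prio_mem : ∀ q a x q', trans q a x q' → x = 1 ∨ x = 2
  complete : ∀ q a, ∃ x q', trans q a x q'

namespace NCA

variable {Q α : Type}

/-- Nondeterministic acceptance from the state `q`. -/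
def AcceptFrom (B : NCA Q α) (q : Q) (w : ℕ → α) : Prop :=
  ∃ (ρ : ℕ → Q) (pri : ℕ → ℕ), ρ 0 = q ∧
    (∀ i : ℕ, B.trans (ρ i) (w i) (pri i) (ρ (i + 1))) ∧ ParityAccept pri

/-- Semantic determinism: every `a`-successor of `p` recognises `a⁻¹ L(p)`. -/
def SemDet (B : NCA Q α) : Prop :=
  ∀ p a x q, B.trans p a x q →
    ∀ w : ℕ → α, (B.AcceptFrom q w ↔ B.AcceptFrom p (prependW [a] w))

/-- Safe determinism: all `a`-transitions from a state carry the same priority, and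
there is at most one `a`-transition of priority `2` from each state. -/
def SafeDet (B : NCA Q α) : Prop :=
  (∀ q a x q' x' q'', B.trans q a x q' → B.trans q a x' q'' → x = x') ∧
  (∀ q a q' q'', B.trans q a 2 q' → B.trans q a 2 q'' → q' = q'')

/-- 1-saturation: priority-1 transitions go to all language-equivalent states. -/
def OneSaturated (B : NCA Q α) : Prop :=
  ∀ q a p p', B.trans q a 1 p →
    (∀ w : ℕ → α, (B.AcceptFrom p' w ↔ B.AcceptFrom p w)) → B.trans q a 1 p'

end NCA

/-! ### Simple-by-priorities alternating parity automata (abstract) -/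

/-- A simple-by-priorities alternating parity automaton: a complete transition system
over `α × [1,d]` in which all `a`-transitions from a state carry the same priority. -/
structure SPA (Q α : Type) (d : ℕ) where
  init : Q
  step : Q → α → Q → Prop
  prio : Q → α → ℕ
  prio_pos : ∀ q a, 1 ≤ prio q a
  prio_le : ∀ q a, prio q a ≤ d
  complete : ∀ q a, ∃ q', step q a q'

/-! ### The congruence on tuples of finite words -/

/-- The data of the congruence at one level (tuples of a fixed length,
represented as reversed lists of components: the head is the last component). -/
structure CongrLevel (α : Type) where
  bot : List (List α) → Prop
  eq : List (List α) → List (List α) → Prop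
  ptd : List (List α) → Prop

/-- Concatenate a finite word to the last component of a tuple
(tuples are represented as reversed lists: the head is the last component). -/
def tcat {α : Type} (t : List (List α)) (v : List α) : List (List α) :=
  match t with
  | h :: rest => (h ++ v) :: rest
  | [] => []

/-- Merge the last two components of a tuple. -/
def tmerge {α : Type} (t : List (List α)) : List (List α) :=
  match t with
  | u' :: h :: rest => (h ++ u') :: rest
  | t' => t'

/-- The congruence data at level `n` (handling tuples of length `n+1`), defined by
recursion on the level, following the inductive definition of `≈ ⊥`, `≈` and `pointed`. -/
def congrData {α : Type} [Inhabited α] (L : Set (ℕ → α)) : ℕ → CongrLevel α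
  | 0 =>
    { bot := fun _ => False
      eq := fun t s =>
        match t, s with
        | [u], [v] => ∀ w : ℕ → α, (prependW u w ∈ L ↔ prependW v w ∈ L)
        | _, _ => False
      ptd := fun _ => True }
  | n + 1 =>
    let C := congrData L n
    let bot : List (List α) → Prop := fun t =>
      match t with
      | u' :: ubar =>
        C.bot (tmerge (u' :: ubar)) ∨
        ∀ w : List α, w ≠ [] → C.eq (tcat (tmerge (u' :: ubar)) w) ubar →
          ((prependW ubar.reverse.flatten (perWord (u' ++ w)) ∈ L) ↔ Even (n + 1))
      | [] => True
    let eq : List (List α) → List (List α) → Prop := fun t s =>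
      C.eq (tmerge t) (tmerge s) ∧ ∀ v : List α, (bot (tcat t v) ↔ bot (tcat s v))
    let ptd : List (List α) → Prop := fun t =>
      match t with
      | u' :: ubar =>
        ¬ bot (u' :: ubar) ∧ C.ptd ubar ∧
        ∀ (vbar : List (List α)) (v' : List α), vbar.length = n + 1 → C.ptd vbar →
          C.eq (tcat vbar v') ubar → ¬ bot ((v' ++ u') :: vbar) →
          eq ((v' ++ u') :: vbar) (u' :: ubar)
      | [] => False
    { bot := bot, eq := eq, ptd := ptd }

/-- `t ≈ ⊥` (for a nonempty tuple `t`, in reversed representation). -/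
def TupBot {α : Type} [Inhabited α] (L : Set (ℕ → α)) (t : List (List α)) : Prop :=
  (congrData L (t.length - 1)).bot t

/-- `t ≈ s` (for nonempty tuples of the same length, in reversed representation). -/
def TupEq {α : Type} [Inhabited α] (L : Set (ℕ → α)) (t s : List (List α)) : Prop :=
  t.length = s.length ∧ (congrData L (t.length - 1)).eq t s

/-- `t` is pointed. -/
def TupPointed {α : Type} [Inhabited α] (L : Set (ℕ → α)) (t : List (List α)) : Prop :=
  (congrData L (t.length - 1)).ptd t

/-- `cls` exhibits `A` as (a copy of) the congruence automaton `A_≈` of `L`: its states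
are the `≈`-classes of pointed tuples (the layer being the tuple length), transitions
are given by concatenation in the last component, the initial state is the class of
`(ε)`, and the morphisms are given by merging the last two components. -/
structure IsCongrAut {α : Type} [Inhabited α] (L : Set (ℕ → α)) {Q : Type} {d : ℕ}
    (A : Layered Q α d) (cls : (t : List (List α)) → TupPointed L t → Q) : Prop where
  surj : ∀ q : Q, ∃ (t : List (List α)) (ht : TupPointed L t), cls t ht = q
  cls_eq : ∀ t ht s hs, cls t ht = cls s hs ↔ TupEq L t s
  layer_eq : ∀ t ht, A.layer (cls t ht) = t.length
  init_eq : ∀ h : TupPointed L [([] : List α)], cls [([] : List α)] h = A.init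
  step_some : ∀ t ht (a : α) (h' : TupPointed L (tcat t [a])),
    A.δ (cls t ht) a = some (cls (tcat t [a]) h')
  step_none : ∀ t ht (a : α), TupBot L (tcat t [a]) → A.δ (cls t ht) a = none
  mu_eq : ∀ (u' : List α) (ubar : List (List α)) (h : TupPointed L (u' :: ubar))
    (h' : TupPointed L (tmerge (u' :: ubar))), ubar ≠ [] →
    A.μ (cls (u' :: ubar) h) = cls (tmerge (u' :: ubar)) h'

end

/-!
A central sequence for `p` is a concatenation of loops at `p`. A loop that sends a state to `p`
or kills it keeps doing so when further loops at `p` are appended, so it suffices to treat the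
finitely many siblings of `p` and children of siblings one at a time. A word safe from `p` but
not from a sibling `q`, followed by a way back to `p` (N1), disposes of `q`; if there is none,
centrality and safe minimality force a repetition that sends `q` to `p`. Children of `p` are
killed by (N2), and a child of another sibling becomes a child of `p` or dies once its parent
is resolved.

Safe minimality only applies once siblings are known to have the same language in `⟦A⟧`; this is
where consistency enters. A resolver that moves to a higher layer whenever the rest of the word
is safe there makes the word strongly accepted or rejected in the layer of the minimal recurring
priority. By consistency the parity of that layer is the parity of the largest layer in which the
word is ultimately safe, so this parity decides acceptance by `⟦A⟧` from every state.
-/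

section Words

variable {α : Type}

@[simp] lemma wordPrefix_zero (w : ℕ → α) : wordPrefix w 0 = [] := rfl

lemma wordPrefix_succ (w : ℕ → α) (n : ℕ) : wordPrefix w (n + 1) = wordPrefix w n ++ [w n] := by
  rw [wordPrefix, wordPrefix, List.ofFn_succ', List.concat_eq_append]
  rfl

@[simp] lemma wordDrop_zero (w : ℕ → α) : wordDrop w 0 = w := by
  funext i; simp [wordDrop]

lemma wordDrop_wordDrop (w : ℕ → α) (m n : ℕ) : wordDrop (wordDrop w m) n = wordDrop w (m + n) := by
  funext i; simp [wordDrop, Nat.add_assoc]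

lemma wordPrefix_add (w : ℕ → α) (m n : ℕ) :
    wordPrefix w (m + n) = wordPrefix w m ++ wordPrefix (wordDrop w m) n := by
  induction n with
  | zero => simp
  | succ n ih => rw [← Nat.add_assoc, wordPrefix_succ, ih, wordPrefix_succ, List.append_assoc]; rfl

end Words

lemma minInfOften_spec {pi : ℕ → ℕ} {D : ℕ} (hb : ∀ i, pi i ≤ D) :
    (∀ N, ∃ n, N ≤ n ∧ pi n = minInfOften pi) ∧ ∃ m, ∀ i, m ≤ i → minInfOften pi ≤ pi i := by
  set S := {x : ℕ | ∀ N : ℕ, ∃ n : ℕ, N ≤ n ∧ pi n = x}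
  have avoid : ∀ Y, (∀ v < Y, v ∉ S) → ∃ m, ∀ i, m ≤ i → Y ≤ pi i := by
    intro Y hY
    have : ∀ᶠ i in Filter.atTop, ∀ v ∈ Set.Iio Y, pi i ≠ v :=
      (Filter.eventually_all_finite (Set.finite_Iio Y)).2 fun v hv => by
        simpa [S, Filter.eventually_atTop] using hY v hv
    obtain ⟨m, hm⟩ := Filter.eventually_atTop.1 this
    exact ⟨m, fun i hi => not_lt.1 fun h => hm i hi _ h rfl⟩
  have hne : S.Nonempty := by
    by_contra h
    obtain ⟨m, hm⟩ := avoid (D + 1) fun v _ hv => h ⟨v, hv⟩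
    have := hb m
    have := hm m le_rfl
    omega
  exact ⟨Nat.sInf_mem hne, avoid _ fun v hv hvS => (Nat.sInf_le hvS).not_gt hv⟩

namespace Layered

variable {Q α : Type} {d : ℕ} (A : Layered Q α d)

section Runs

@[simp] lemma runList_nil (q : Q) : A.runList q [] = some q := rfl

lemma runList_append (u v : List α) (q : Q) :
    A.runList q (u ++ v) = (A.runList q u).bind (A.runList · v) := by
  induction u generalizing q with
  | nil => rfl
  | cons a u ih => cases h : A.δ q a <;> simp [runList, h, ih]

lemma runList_append_of_eq_some {q r : Q} {u : List α} (h : A.runList q u = some r)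
    (v : List α) : A.runList q (u ++ v) = A.runList r v := by
  rw [runList_append, h, Option.bind_some]

lemma runList_append_of_eq_none {q : Q} {u : List α} (h : A.runList q u = none) (v : List α) :
    A.runList q (u ++ v) = none := by
  rw [runList_append, h, Option.bind_none]

lemma runList_singleton (q : Q) (a : α) : A.runList q [a] = A.δ q a := by
  cases h : A.δ q a <;> simp [runList, h]

lemma layer_runList {q r : Q} {u : List α} (h : A.runList q u = some r) :
    A.layer r = A.layer q := by
  induction u generalizing q with
  | nil => cases h; rfl
  | cons a u ih =>
    cases hδ : A.δ q a with
    | none => simp [runList, hδ] at h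
    | some t =>
      simp only [runList, hδ] at h
      rw [ih h, A.δ_layer q a t hδ]

end Runs

section Ancestors

lemma layer_iterate_mu {n : ℕ} {q : Q} (h : n < A.layer q) :
    A.layer (A.μ^[n] q) = A.layer q - n := by
  induction n with
  | zero => rfl
  | succ n ih =>
    rw [Function.iterate_succ_apply']
    have := A.μ_layer _ (show 1 < A.layer (A.μ^[n] q) by rw [ih (by omega)]; omega)
    rw [ih (by omega)] at this
    omega

lemma layer_muHat {x : ℕ} {q : Q} (hx : 1 ≤ x) (hxq : x ≤ A.layer q) :
    A.layer (A.muHat x q) = x := by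
  rw [muHat, A.layer_iterate_mu (by omega)]
  omega

lemma muHat_of_layer_le {x : ℕ} {q : Q} (h : A.layer q ≤ x) : A.muHat x q = q := by
  rw [muHat, Nat.sub_eq_zero_of_le h, Function.iterate_zero_apply]

@[simp] lemma muHat_layer_self (q : Q) : A.muHat (A.layer q) q = q :=
  A.muHat_of_layer_le le_rfl

lemma muHat_muHat {x y : ℕ} {q : Q} (hx : 1 ≤ x) (hxy : x ≤ y) (hyq : y ≤ A.layer q) :
    A.muHat x (A.muHat y q) = A.muHat x q := by
  rw [muHat, A.layer_muHat (hx.trans hxy) hyq, muHat, muHat, ← Function.iterate_add_apply]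
  congr 1
  omega

lemma muHat_of_layer_eq_succ {x : ℕ} {q : Q} (h : A.layer q = x + 1) : A.muHat x q = A.μ q := by
  rw [muHat, h, Nat.add_sub_cancel_left, Function.iterate_one]

lemma muHat_mu {x : ℕ} {q : Q} (hq : 1 < A.layer q) (hx : x < A.layer q) :
    A.muHat x (A.μ q) = A.muHat x q := by
  have := A.μ_layer q hq
  rw [muHat, muHat, show A.layer q - x = (A.layer (A.μ q) - x) + 1 by omega,
    Function.iterate_succ_apply]

variable {A} in
lemma IsAncestor.trans {p q r : Q} (hpq : A.IsAncestor p q) (hqr : A.IsAncestor q r) :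
    A.IsAncestor p r := by
  refine ⟨hpq.1.trans hqr.1, ?_⟩
  rw [← A.muHat_muHat (A.layer_pos p) hpq.1 hqr.1, hqr.2, hpq.2]

lemma isAncestor_mu {q : Q} (hq : 1 < A.layer q) : A.IsAncestor (A.μ q) q := by
  have := A.μ_layer q hq
  exact ⟨by omega, A.muHat_of_layer_eq_succ this.symm⟩

lemma exists_isLeaf_isAncestor (s : Q) : ∃ l, A.IsLeaf l ∧ A.IsAncestor s l := by
  by_cases hs : A.IsLeaf s
  · exact ⟨s, hs, le_rfl, A.muHat_layer_self s⟩
  · obtain ⟨p, hp, hps⟩ : ∃ p, 1 < A.layer p ∧ A.μ p = s := by simpa [IsLeaf] using hs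
    obtain ⟨l, hl, hpl⟩ := exists_isLeaf_isAncestor p
    exact ⟨l, hl, hps ▸ (A.isAncestor_mu hp).trans hpl⟩
termination_by d - A.layer s
decreasing_by have := A.μ_layer p hp; have := A.layer_le p; rw [hps] at *; omega

noncomputable def leafAbove (s : Q) : Q := (A.exists_isLeaf_isAncestor s).choose

lemma isLeaf_leafAbove (s : Q) : A.IsLeaf (A.leafAbove s) :=
  (A.exists_isLeaf_isAncestor s).choose_spec.1

lemma isAncestor_leafAbove (s : Q) : A.IsAncestor s (A.leafAbove s) :=
  (A.exists_isLeaf_isAncestor s).choose_spec.2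

lemma muHat_leafAbove {x : ℕ} {s : Q} (hx : 1 ≤ x) (hxs : x ≤ A.layer s) :
    A.muHat x (A.leafAbove s) = A.muHat x s := by
  obtain ⟨hle, hmu⟩ := A.isAncestor_leafAbove s
  rw [← A.muHat_muHat hx hxs hle, hmu]

end Ancestors

section Projection

lemma δ_muHat {q q' : Q} {a : α} (h : A.δ q a = some q') {x : ℕ} (hx : 1 ≤ x)
    (hxq : x ≤ A.layer q) : A.δ (A.muHat x q) a = some (A.muHat x q') := by
  suffices ∀ n, n + x ≤ A.layer q → A.δ (A.μ^[n] q) a = some (A.μ^[n] q') by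
    rw [muHat, muHat, A.δ_layer _ _ _ h]
    exact this _ (by omega)
  intro n hn
  induction n with
  | zero => exact h
  | succ n ih =>
    rw [Function.iterate_succ_apply', Function.iterate_succ_apply']
    refine A.μ_morph _ a _ ?_ (ih (by omega))
    rw [A.layer_iterate_mu (by omega)]
    omega

lemma runList_muHat {q q' : Q} {u : List α} (h : A.runList q u = some q') {x : ℕ} (hx : 1 ≤ x)
    (hxq : x ≤ A.layer q) : A.runList (A.muHat x q) u = some (A.muHat x q') := by
  induction u generalizing q with
  | nil => cases h; rfl
  | cons a u ih =>
    cases hδ : A.δ q a with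
    | none => simp [runList, hδ] at h
    | some t =>
      simp only [runList, hδ] at h
      simp only [runList, A.δ_muHat hδ hx hxq]
      exact ih h (by rwa [A.δ_layer q a t hδ])

lemma runList_mu {q q' : Q} {u : List α} (h : A.runList q u = some q') (hq : 1 < A.layer q) :
    A.runList (A.μ q) u = some (A.μ q') := by
  have := A.runList_muHat h (x := A.layer q - 1) (by omega) (by omega)
  rwa [A.muHat_of_layer_eq_succ (by omega),
    A.muHat_of_layer_eq_succ (by rw [A.layer_runList h]; omega)] at this

lemma muHat_runList_eq {q q' r r' : Q} {u : List α} (hq : A.runList q u = some q')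
    (hr : A.runList r u = some r') {x : ℕ} (hx : 1 ≤ x) (hxq : x ≤ A.layer q)
    (hxr : x ≤ A.layer r) (h : A.muHat x q = A.muHat x r) : A.muHat x q' = A.muHat x r' := by
  have h₁ := A.runList_muHat hq hx hxq
  rw [h, A.runList_muHat hr hx hxr] at h₁
  exact (Option.some_inj.mp h₁).symm

end Projection

section SafeLanguages

lemma safeFin_layer_iff (q : Q) (u : List α) :
    A.SafeFin (A.layer q) q u ↔ (A.runList q u).isSome := by
  rw [SafeFin, muHat_layer_self]

lemma safeInf_layer_iff (q : Q) (w : ℕ → α) :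
    A.SafeInf (A.layer q) q w ↔ ∀ n, (A.runList q (wordPrefix w n)).isSome := by
  simp only [SafeInf, safeFin_layer_iff]

lemma safeInf_wordDrop {q q' : Q} {w : ℕ → α} {k : ℕ} (hs : A.SafeInf (A.layer q) q w)
    (h : A.runList q (wordPrefix w k) = some q') : A.SafeInf (A.layer q') q' (wordDrop w k) := by
  rw [safeInf_layer_iff] at hs ⊢
  intro n
  simpa only [wordPrefix_add, A.runList_append_of_eq_some h] using hs (k + n)

/-- Strong acceptance and strong rejection without the parity of the layer. -/
def StronglySafe (p : Q) (w : ℕ → α) : Prop :=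
  A.SafeInf (A.layer p) p w ∧
  ∀ (n : ℕ) (p' : Q), A.layer p' = A.layer p + 1 →
    A.runList p (wordPrefix w n) = some (A.μ p') →
    ¬ A.SafeInf (A.layer p') p' (wordDrop w n)

def StronglySafeFrom (c : Q) (x : ℕ) (w : ℕ → α) : Prop :=
  ∃ (n : ℕ) (p : Q), A.layer p = x ∧ A.runList c (wordPrefix w n) = some (A.muHat 1 p) ∧
    A.StronglySafe p (wordDrop w n)

variable {A}

lemma StronglySafe.wordDrop {p p' : Q} {w : ℕ → α} {k : ℕ}
    (hs : A.StronglySafe p w) (h : A.runList p (wordPrefix w k) = some p') :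
    A.StronglySafe p' (wordDrop w k) := by
  have hl := A.layer_runList h
  refine ⟨A.safeInf_wordDrop hs.1 h, fun n r hr hrun => ?_⟩
  rw [wordDrop_wordDrop]
  refine hs.2 (k + n) r (by omega) ?_
  rwa [wordPrefix_add, A.runList_append_of_eq_some h]

lemma StronglySafeFrom.eventually {c : Q} {x : ℕ} {w : ℕ → α}
    (h : A.StronglySafeFrom c x w) : ∃ n₀, ∀ N, n₀ ≤ N →
      ∃ p, A.layer p = x ∧ A.runList c (wordPrefix w N) = some (A.muHat 1 p) ∧
        A.StronglySafe p (wordDrop w N) := by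
  obtain ⟨n, p, hp, hc, hs⟩ := h
  refine ⟨n, fun N hN => ?_⟩
  obtain ⟨k, rfl⟩ := Nat.exists_eq_add_of_le hN
  obtain ⟨p', hp'⟩ := Option.isSome_iff_exists.mp ((A.safeInf_layer_iff p _).mp hs.1 k)
  refine ⟨p', (A.layer_runList hp').trans hp, ?_, ?_⟩
  · rw [wordPrefix_add, A.runList_append_of_eq_some hc]
    exact A.runList_muHat hp' le_rfl (A.layer_pos p)
  · simpa only [wordDrop_wordDrop] using hs.wordDrop hp'

lemma Consistent.even_iff (hcons : A.Consistent) {c : Q} {x y : ℕ}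
    {w : ℕ → α} (hx : A.StronglySafeFrom c x w) (hy : A.StronglySafeFrom c y w) :
    Even x ↔ Even y := by
  obtain ⟨n₁, h₁⟩ := hx.eventually
  obtain ⟨n₂, h₂⟩ := hy.eventually
  obtain ⟨p, rfl, hpc, hp⟩ := h₁ (max n₁ n₂) (le_max_left _ _)
  obtain ⟨q, rfl, hqc, hq⟩ := h₂ (max n₁ n₂) (le_max_right _ _)
  have hpq : A.muHat 1 p = A.muHat 1 q := Option.some_inj.mp (hpc.symm.trans hqc)
  have key : ∀ p q, A.muHat 1 p = A.muHat 1 q → A.StronglySafe p (wordDrop w (max n₁ n₂)) →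
      A.StronglySafe q (wordDrop w (max n₁ n₂)) → Even (A.layer p) → Even (A.layer q) := by
    intro p q hpq hp hq he
    by_contra ho
    exact hcons ⟨p, q, _, hpq, ⟨he, hp⟩, ⟨Nat.not_even_iff_odd.mp ho, hq⟩⟩
  exact ⟨key p q hpq hp hq, key q p hpq.symm hq hp⟩

end SafeLanguages

section LayerOne

lemma isSome_runList_of_layer_eq_one {q : Q} (hq : A.layer q = 1) (u : List α) :
    (A.runList q u).isSome := by
  induction u generalizing q with
  | nil => rfl
  | cons a u ih =>
    obtain ⟨t, ht⟩ := Option.isSome_iff_exists.mp (A.complete1 q a hq)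
    simpa only [runList, ht] using ih ((A.δ_layer q a t ht).trans hq)

lemma safeFin_one (q : Q) (u : List α) : A.SafeFin 1 q u :=
  A.isSome_runList_of_layer_eq_one (A.layer_muHat le_rfl (A.layer_pos q)) u

lemma ultSafeFrom_one {c : Q} (hc : A.layer c = 1) (w : ℕ → α) : A.UltSafeFrom c 1 w :=
  ⟨0, c, hc, by rw [wordPrefix_zero, runList_nil, A.muHat_of_layer_le hc.le],
    fun _ => A.safeFin_one _ _⟩

noncomputable def maxSafeLayer (c : Q) (w : ℕ → α) : ℕ :=
  Nat.findGreatest (fun y => A.UltSafeFrom c y w) d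

lemma le_maxSafeLayer {c : Q} {w : ℕ → α} {y : ℕ} (h : A.UltSafeFrom c y w) :
    y ≤ A.maxSafeLayer c w :=
  Nat.le_findGreatest (by obtain ⟨n, p, rfl, -⟩ := h; exact A.layer_le p) h

lemma stronglySafeFrom_maxSafeLayer {c : Q} (hc : A.layer c = 1) (w : ℕ → α) :
    A.StronglySafeFrom c (A.maxSafeLayer c w) w := by
  obtain ⟨n, p, hp, hpc, hs⟩ : A.UltSafeFrom c (A.maxSafeLayer c w) w :=
    Nat.findGreatest_spec (P := fun y => A.UltSafeFrom c y w) (hc ▸ A.layer_le c)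
      (A.ultSafeFrom_one hc w)
  refine ⟨n, p, hp, hpc, hp ▸ hs, fun k p' hp' hrun hsafe => ?_⟩
  have := A.layer_pos p
  suffices A.UltSafeFrom c (A.layer p') w by have := A.le_maxSafeLayer this; omega
  refine ⟨n + k, p', rfl, ?_, by rwa [wordDrop_wordDrop] at hsafe⟩
  rw [wordPrefix_add, A.runList_append_of_eq_some hpc, A.runList_muHat hrun le_rfl (A.layer_pos p),
    A.muHat_mu (by omega) (by omega)]

end LayerOne

section SemanticSteps

lemma layerOf_pos (q : Q) (a : α) : 1 ≤ A.layerOf q a :=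
  Nat.le_findGreatest (A.layer_pos q)
    (A.complete1 _ a (A.layer_muHat le_rfl (A.layer_pos q)))

lemma layerOf_le (q : Q) (a : α) : A.layerOf q a ≤ A.layer q := Nat.findGreatest_le _

lemma isSome_δ_layerOf (q : Q) (a : α) : (A.δ (A.muHat (A.layerOf q a) q) a).isSome :=
  Nat.findGreatest_spec (P := fun x => (A.δ (A.muHat x q) a).isSome = true) (A.layer_pos q)
    (A.complete1 _ a (A.layer_muHat le_rfl (A.layer_pos q)))

lemma le_layerOf {q : Q} {a : α} {x : ℕ} (hx : x ≤ A.layer q)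
    (h : (A.δ (A.muHat x q) a).isSome) : x ≤ A.layerOf q a :=
  Nat.le_findGreatest hx h

lemma semStep_exists (q : Q) (a : α) : ∃ q', A.semStep q a q' := by
  obtain ⟨r, hr⟩ := Option.isSome_iff_exists.mp (A.isSome_δ_layerOf q a)
  have hlr : A.layer r = A.layerOf q a := by
    rw [A.δ_layer _ _ _ hr, A.layer_muHat (A.layerOf_pos q a) (A.layerOf_le q a)]
  refine ⟨A.leafAbove r, A.isLeaf_leafAbove r, ?_⟩
  rw [hr, ← hlr, (A.isAncestor_leafAbove r).2]

variable {A}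

lemma layerOf_le_of_semStep {q q' : Q} {a : α} (h : A.semStep q a q') :
    A.layerOf q a ≤ A.layer q' := by
  by_contra hlt
  have h₁ := A.δ_layer _ _ _ h.2
  rw [A.muHat_of_layer_le (by omega : A.layer q' ≤ A.layerOf q a),
    A.layer_muHat (A.layerOf_pos q a) (A.layerOf_le q a)] at h₁
  omega

lemma δ_muHat_of_semStep {q q' : Q} {a : α} (h : A.semStep q a q') {x : ℕ} (hx : 1 ≤ x)
    (hxa : x ≤ A.layerOf q a) : A.δ (A.muHat x q) a = some (A.muHat x q') := by
  have := A.δ_muHat h.2 hx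
    (by rwa [A.layer_muHat (A.layerOf_pos q a) (A.layerOf_le q a)])
  rwa [A.muHat_muHat hx hxa (A.layerOf_le q a),
    A.muHat_muHat hx hxa (layerOf_le_of_semStep h)] at this

lemma IsAncestor.semStep {q q' t t' : Q} {a : α} (ht : A.IsAncestor t q) (h : A.semStep q a q')
    (hδ : A.δ t a = some t') : A.layer t ≤ A.layerOf q a ∧ A.IsAncestor t' q' := by
  obtain ⟨hle, hmu⟩ := ht
  have hla : A.layer t ≤ A.layerOf q a := A.le_layerOf hle (by rw [hmu, hδ]; rfl)
  have h₁ := δ_muHat_of_semStep h (A.layer_pos t) hla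
  rw [hmu, hδ] at h₁
  rw [IsAncestor, A.δ_layer _ _ _ hδ]
  exact ⟨hla, hla.trans (layerOf_le_of_semStep h), (Option.some_inj.mp h₁).symm⟩

end SemanticSteps

section Greedy

/-- The states the greedy resolver moves above whenever possible: they lie over the
`a`-successor of `q` in a layer above the priority, and the rest of `w` is safe from them. -/
def IsAnchorCandidate (w : ℕ → α) (i : ℕ) (q : Q) (a : α) (t : Q) : Prop :=
  A.layerOf q a < A.layer t ∧
  A.δ (A.muHat (A.layerOf q a) q) a = some (A.muHat (A.layerOf q a) t) ∧
  A.SafeInf (A.layer t) t (wordDrop w (i + 1))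

noncomputable def greedyPick (w : ℕ → α) (i : ℕ) (q : Q) (a : α) : Q :=
  if h : ∃ t, A.IsAnchorCandidate w i q a t then A.leafAbove h.choose
  else (A.semStep_exists q a).choose

lemma semStep_greedyPick (w : ℕ → α) (i : ℕ) (q : Q) (a : α) :
    A.semStep q a (A.greedyPick w i q a) := by
  unfold greedyPick
  split_ifs with h
  · obtain ⟨hlt, hδ, -⟩ := h.choose_spec
    exact ⟨A.isLeaf_leafAbove _, by rwa [A.muHat_leafAbove (A.layerOf_pos q a) hlt.le]⟩
  · exact (A.semStep_exists q a).choose_spec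

def AnchorsAt (w : ℕ → α) (ρ : ℕ → Q) (i : ℕ) : Prop :=
  (∃ t, A.IsAnchorCandidate w i (ρ i) (w i) t) →
    ∃ t, A.IsAnchorCandidate w i (ρ i) (w i) t ∧ A.IsAncestor t (ρ (i + 1))

variable {A} {w : ℕ → α} {ρ : ℕ → Q}

lemma anchorsAt_of_eq_greedyPick {i : ℕ} (h : ρ (i + 1) = A.greedyPick w i (ρ i) (w i)) :
    A.AnchorsAt w ρ i := by
  intro hc
  refine ⟨hc.choose, hc.choose_spec, ?_⟩
  rw [h, greedyPick, dif_pos hc]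
  exact A.isAncestor_leafAbove _

lemma runList_muHat_of_semStep (hρ : ∀ i, A.semStep (ρ i) (w i) (ρ (i + 1))) {x m : ℕ}
    (hx : 1 ≤ x) (hm : ∀ j, m ≤ j → x ≤ A.layerOf (ρ j) (w j)) (n : ℕ) :
    A.runList (A.muHat x (ρ m)) (wordPrefix (wordDrop w m) n) =
      some (A.muHat x (ρ (m + n))) := by
  induction n with
  | zero => rfl
  | succ n ih =>
    rw [wordPrefix_succ, A.runList_append_of_eq_some ih, runList_singleton, ← Nat.add_assoc]
    exact δ_muHat_of_semStep (hρ (m + n)) hx (hm _ (Nat.le_add_right m n))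

lemma le_layerOf_of_isAncestor (hρ : ∀ i, A.semStep (ρ i) (w i) (ρ (i + 1))) {t : Q} {i₀ : ℕ}
    (ht : A.IsAncestor t (ρ i₀)) (hs : A.SafeInf (A.layer t) t (wordDrop w i₀)) (j : ℕ)
    (hj : i₀ ≤ j) : A.layer t ≤ A.layerOf (ρ j) (w j) := by
  have hsome := (A.safeInf_layer_iff t _).mp hs
  have hnext : ∀ n tn, A.runList t (wordPrefix (wordDrop w i₀) n) = some tn →
      ∃ t', A.δ tn (w (i₀ + n)) = some t' ∧
        A.runList t (wordPrefix (wordDrop w i₀) (n + 1)) = some t' := by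
    intro n tn htn
    obtain ⟨t', ht'⟩ := Option.isSome_iff_exists.mp (hsome (n + 1))
    refine ⟨t', ?_, ht'⟩
    rwa [wordPrefix_succ, A.runList_append_of_eq_some htn, runList_singleton] at ht'
  have hanc : ∀ n, ∃ tn, A.runList t (wordPrefix (wordDrop w i₀) n) = some tn ∧
      A.layer tn = A.layer t ∧ A.IsAncestor tn (ρ (i₀ + n)) := by
    intro n
    induction n with
    | zero => exact ⟨t, rfl, rfl, ht⟩
    | succ n ih =>
      obtain ⟨tn, htn, hl, ha⟩ := ih
      obtain ⟨t', hδ, ht'⟩ := hnext n tn htn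
      exact ⟨t', ht', (A.δ_layer _ _ _ hδ).trans hl, (ha.semStep (hρ _) hδ).2⟩
  obtain ⟨n, rfl⟩ := Nat.exists_eq_add_of_le hj
  obtain ⟨tn, htn, hl, ha⟩ := hanc n
  obtain ⟨t', hδ, -⟩ := hnext n tn htn
  exact hl ▸ (ha.semStep (hρ _) hδ).1

/-- An escape from the layer-`Y` projection of the run to a safe child yields an anchor
candidate at the next step of priority `Y`; anchoring there pushes all later priorities
above `Y`. -/
lemma not_safeInf_of_anchorsAt (hρ : ∀ i, A.semStep (ρ i) (w i) (ρ (i + 1))) {Y m : ℕ}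
    (hinf : ∀ N, ∃ n, N ≤ n ∧ A.layerOf (ρ n) (w n) = Y)
    (hanch : ∀ i, A.layerOf (ρ i) (w i) = Y → A.AnchorsAt w ρ i)
    (htrack : ∀ n, A.runList (A.muHat Y (ρ m)) (wordPrefix (wordDrop w m) n) =
      some (A.muHat Y (ρ (m + n))))
    {n : ℕ} {p' : Q} (hp' : A.layer p' = Y + 1)
    (hrun : A.runList (A.muHat Y (ρ m)) (wordPrefix (wordDrop w m) n) = some (A.μ p')) :
    ¬ A.SafeInf (A.layer p') p' (wordDrop w (m + n)) := by
  intro hsafe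
  obtain ⟨i, hi, hiY⟩ := hinf (m + n)
  obtain ⟨k, rfl⟩ := Nat.exists_eq_add_of_le hi
  have hY : 1 ≤ Y := hiY ▸ A.layerOf_pos _ _
  have hsome := (A.safeInf_layer_iff p' _).mp hsafe
  obtain ⟨t, ht⟩ := Option.isSome_iff_exists.mp (hsome k)
  obtain ⟨t', ht'⟩ := Option.isSome_iff_exists.mp (hsome (k + 1))
  have hδ := ht'
  rw [wordPrefix_succ, A.runList_append_of_eq_some ht, runList_singleton] at hδ
  have hlt : A.layer t = Y + 1 := (A.layer_runList ht).trans hp'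
  have hmut : A.muHat Y (ρ (m + n + k)) = A.μ t := by
    have h₁ := htrack (n + k)
    rw [wordPrefix_add, wordDrop_wordDrop, A.runList_append_of_eq_some hrun,
      A.runList_mu ht (by omega), ← Nat.add_assoc] at h₁
    exact (Option.some_inj.mp h₁).symm
  have hcand : A.IsAnchorCandidate w (m + n + k) (ρ (m + n + k)) (w (m + n + k)) t' := by
    have hlt' : A.layer t' = Y + 1 := (A.δ_layer _ _ _ hδ).trans hlt
    refine ⟨by omega, ?_, ?_⟩
    · rw [hiY, hmut, A.muHat_of_layer_eq_succ hlt']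
      exact A.μ_morph t _ t' (by omega) hδ
    · simpa only [wordDrop_wordDrop, ← Nat.add_assoc] using A.safeInf_wordDrop hsafe ht'
  obtain ⟨t₀, hc₀, ha₀⟩ := hanch _ hiY ⟨t', hcand⟩
  obtain ⟨j, hj, hjY⟩ := hinf (m + n + k + 1)
  have := le_layerOf_of_isAncestor hρ ha₀ hc₀.2.2 j hj
  have := hc₀.1
  omega

lemma stronglySafeFrom_minInfOften (hρ : ∀ i, A.semStep (ρ i) (w i) (ρ (i + 1)))
    (hanch : ∀ i, A.layerOf (ρ i) (w i) = minInfOften (A.runPrios w ρ) → A.AnchorsAt w ρ i) :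
    A.StronglySafeFrom (A.muHat 1 (ρ 0)) (minInfOften (A.runPrios w ρ)) w := by
  set Y := minInfOften (A.runPrios w ρ)
  obtain ⟨hinf, m, hm⟩ := minInfOften_spec (D := d)
    fun i => (A.layerOf_le (ρ i) (w i)).trans (A.layer_le _)
  have hY : 1 ≤ Y := by
    obtain ⟨n, -, hn⟩ := hinf 0
    exact (A.layerOf_pos (ρ n) (w n)).trans_eq hn
  have hYm : Y ≤ A.layer (ρ m) := (hm m le_rfl).trans (A.layerOf_le _ _)
  have hlayer := A.layer_muHat hY hYm
  have htrack := runList_muHat_of_semStep hρ hY hm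
  refine ⟨m, A.muHat Y (ρ m), hlayer, ?_,
    ⟨(A.safeInf_layer_iff _ _).2 fun n => by rw [htrack n]; rfl, fun n p' hp' hrun => ?_⟩⟩
  · have := runList_muHat_of_semStep hρ le_rfl (fun j _ => A.layerOf_pos _ _) (m := 0) m
    rwa [wordDrop_zero, Nat.zero_add, ← A.muHat_muHat le_rfl hY hYm] at this
  · rw [wordDrop_wordDrop]
    exact not_safeInf_of_anchorsAt (Y := Y) hρ hinf hanch htrack (by rw [hp', hlayer]) hrun

end Greedy

section Semantics

variable {A}

lemma even_minInfOften_iff (hcons : A.Consistent) {w : ℕ → α} {l : Q} {ρ : ℕ → Q}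
    (hρ : A.IsSemRun w l ρ)
    (hanch : ∀ i, A.layerOf (ρ i) (w i) = minInfOften (A.runPrios w ρ) → A.AnchorsAt w ρ i) :
    Even (minInfOften (A.runPrios w ρ)) ↔ Even (A.maxSafeLayer (A.muHat 1 l) w) :=
  hcons.even_iff (hρ.1 ▸ stronglySafeFrom_minInfOften hρ.2 hanch)
    (A.stronglySafeFrom_maxSafeLayer (A.layer_muHat le_rfl (A.layer_pos l)) w)

lemma semAccept_of_even (hcons : A.Consistent) {l : Q} {w : ℕ → α}
    (he : Even (A.maxSafeLayer (A.muHat 1 l) w)) : A.SemAccept l w := by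
  refine ⟨fun h q a => A.greedyPick w h.length q a, fun h q a _ => A.semStep_greedyPick _ _ q a,
    fun ρ hρ hσ => ?_⟩
  by_contra hodd
  rw [ParityAccept, Nat.not_even_iff_odd] at hodd
  refine Nat.not_even_iff_odd.mpr hodd ((even_minInfOften_iff hcons hρ fun i hi => ?_).mpr he)
  have hodd_i : Odd (A.layerOf (ρ i) (w i)) := hi ▸ hodd
  refine anchorsAt_of_eq_greedyPick ?_
  simp only [hσ i hodd_i, List.length_ofFn]

lemma exists_semRun_consEve {σ : List (Q × α) → Q → α → Q} (hσ : A.EveResolver σ)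
    {τ : ℕ → Q → α → Q} (hτ : ∀ i q a, A.semStep q a (τ i q a)) (l : Q) (w : ℕ → α) :
    ∃ ρ, A.IsSemRun w l ρ ∧ A.ConsEve σ w ρ ∧
      ∀ i, Even (A.layerOf (ρ i) (w i)) → ρ (i + 1) = τ i (ρ i) (w i) := by
  let next : ℕ → List (Q × α) → Q → Q := fun i h q =>
    if Odd (A.layerOf q (w i)) then σ h q (w i) else τ i q (w i)
  let play : ℕ → List (Q × α) × Q := fun n =>
    Nat.rec ([], l) (fun i hq => (hq.1 ++ [(hq.2, w i)], next i hq.1 hq.2)) n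
  have hhist : ∀ i, (play i).1 = List.ofFn fun j : Fin i => ((play j).2, w j) := by
    intro i
    induction i with
    | zero => rfl
    | succ i ih =>
      change (play i).1 ++ [((play i).2, w i)] = _
      rw [ih, List.ofFn_succ', List.concat_eq_append]
      rfl
  refine ⟨fun n => (play n).2, ⟨rfl, fun i => ?_⟩, fun i hi => ?_, fun i hi => ?_⟩
  · change A.semStep _ _ (next i (play i).1 (play i).2)
    by_cases h : Odd (A.layerOf (play i).2 (w i))
    · simpa only [next, if_pos h] using hσ _ _ _ h
    · simpa only [next, if_neg h] using hτ _ _ _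
  · change next i (play i).1 (play i).2 = _
    rw [← hhist]
    exact if_pos hi
  · exact if_neg (Nat.not_odd_iff_even.mpr hi)

lemma not_semAccept_of_odd (hcons : A.Consistent) {l : Q} {w : ℕ → α}
    (ho : Odd (A.maxSafeLayer (A.muHat 1 l) w)) : ¬ A.SemAccept l w := by
  rintro ⟨σ, hσ, hwin⟩
  obtain ⟨ρ, hρ, hρσ, hρτ⟩ := exists_semRun_consEve hσ (A.semStep_greedyPick w) l w
  have he : Even (minInfOften (A.runPrios w ρ)) := hwin ρ hρ hρσ
  refine Nat.not_even_iff_odd.mpr ho ((even_minInfOften_iff hcons hρ fun i hi => ?_).mp he)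
  exact anchorsAt_of_eq_greedyPick (hρτ i (hi ▸ he))

theorem semAccept_iff (hcons : A.Consistent) (l : Q) (w : ℕ → α) :
    A.SemAccept l w ↔ Even (A.maxSafeLayer (A.muHat 1 l) w) :=
  ⟨fun h => by_contra fun he => not_semAccept_of_odd hcons (Nat.not_even_iff_odd.mp he) h,
    semAccept_of_even hcons⟩

lemma langEq1_of_muHat_one_eq (hcons : A.Consistent) {p q : Q}
    (h : A.muHat 1 p = A.muHat 1 q) : A.LangEq1 p q := by
  intro l l' _ _ hl hl' w
  rw [semAccept_iff hcons, semAccept_iff hcons, hl, hl', h]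

end Semantics

section CentralSequences

def RunsLE (p q : Q) : Prop := ∀ u : List α, (A.runList p u).isSome → (A.runList q u).isSome

def IsSibling (p q : Q) : Prop :=
  A.layer q = A.layer p ∧ A.muHat (A.layer p - 1) q = A.muHat (A.layer p - 1) p

def IsSiblingChild (p g : Q) : Prop :=
  A.layer g = A.layer p + 1 ∧ A.muHat (A.layer p - 1) g = A.muHat (A.layer p - 1) p

/-- `u` sends `q` to `p` or kills it: the condition a central sequence of `p` imposes on `q`. -/
def Resolves (p q : Q) (u : List α) : Prop := A.runList q u = some p ∨ A.runList q u = none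

variable {A}

lemma RunsLE.trans {p q r : Q} (h₁ : A.RunsLE p q) (h₂ : A.RunsLE q r) : A.RunsLE p r :=
  fun u h => h₂ u (h₁ u h)

lemma RunsLE.runList {p q p' q' : Q} {u : List α} (h : A.RunsLE p q)
    (hp : A.runList p u = some p') (hq : A.runList q u = some q') : A.RunsLE p' q' := by
  intro v hv
  have := h (u ++ v) (by rwa [A.runList_append_of_eq_some hp])
  rwa [A.runList_append_of_eq_some hq] at this

lemma RunsLE.safeLE {p q : Q} (h : A.RunsLE p q) (hl : A.layer q = A.layer p) :
    A.SafeLE (A.layer p) p q := by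
  have hfin : ∀ u, A.SafeFin (A.layer p) p u → A.SafeFin (A.layer p) q u := by
    intro u hu
    rw [safeFin_layer_iff] at hu
    rw [← hl, safeFin_layer_iff]
    exact h u hu
  exact ⟨hfin, fun w hw n => hfin _ (hw n)⟩

lemma IsSibling.runList {p q p' q' : Q} {u : List α} (hx : 2 ≤ A.layer p) (hs : A.IsSibling p q)
    (hp : A.runList p u = some p') (hq : A.runList q u = some q') : A.IsSibling p' q' := by
  have := hs.1
  rw [IsSibling, A.layer_runList hp, A.layer_runList hq]
  exact ⟨hs.1, A.muHat_runList_eq hq hp (by omega) (by omega) (by omega) hs.2⟩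

lemma IsSiblingChild.runList {p g g' : Q} {u : List α} (hx : 2 ≤ A.layer p)
    (hg : A.IsSiblingChild p g) (hp : A.runList p u = some p) (hg' : A.runList g u = some g') :
    A.IsSiblingChild p g' := by
  have := hg.1
  rw [IsSiblingChild, A.layer_runList hg']
  exact ⟨hg.1, A.muHat_runList_eq hg' hp (by omega) (by omega) (by omega) hg.2⟩

lemma Resolves.append_loop {p q : Q} {u v : List α} (h : A.Resolves p q u)
    (hv : A.runList p v = some p) : A.Resolves p q (u ++ v) :=
  h.imp (fun h => by rwa [A.runList_append_of_eq_some h]) (fun h => A.runList_append_of_eq_none h v)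

lemma eq_of_runsLE_of_runsLE (hcons : A.Consistent) (hmin : A.SafeMinimal) {p q : Q}
    (hx : 2 ≤ A.layer p) (hs : A.IsSibling p q) (h₁ : A.RunsLE p q) (h₂ : A.RunsLE q p) :
    p = q := by
  have hq := hs.1
  have hbelow : ∀ {y}, 1 ≤ y → y ≤ A.layer p - 1 → A.muHat y p = A.muHat y q := fun hy hyx => by
    rw [← A.muHat_muHat hy hyx (by omega : A.layer p - 1 ≤ A.layer p),
      ← A.muHat_muHat hy hyx (by omega : A.layer p - 1 ≤ A.layer q), hs.2]
  refine hmin p q hq.symm ⟨langEq1_of_muHat_one_eq hcons (hbelow le_rfl (by omega)),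
    fun y hy hyx => ?_⟩
  have hfin : ∀ u, A.SafeFin y p u ↔ A.SafeFin y q u := by
    rcases (show y ≤ A.layer p - 1 ∨ y = A.layer p by omega) with hy' | rfl
    · intro u
      rw [SafeFin, SafeFin, hbelow (by omega) hy']
    · intro u
      rw [safeFin_layer_iff, ← hq, safeFin_layer_iff]
      exact ⟨h₁ u, h₂ u⟩
  exact ⟨hfin, fun w => forall_congr' fun n => hfin _⟩

lemma exists_loop_kills_child (hnorm : A.NormalForm) {p g : Q} (hx : 2 ≤ A.layer p)
    (hg : 1 < A.layer g) (hgp : A.μ g = p) :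
    ∃ u, A.runList p u = some p ∧ A.runList g u = none := by
  obtain ⟨v, hv, hgv⟩ := (hnorm p hx).2 g hg hgp
  obtain ⟨t, ht⟩ := Option.isSome_iff_exists.mp hv
  obtain ⟨r, -, hr⟩ := (hnorm p hx).1 v t ht
  exact ⟨v ++ r, by rwa [A.runList_append_of_eq_some ht], A.runList_append_of_eq_none hgv r⟩

/-- If `L(p) ⊆ L(q)`, centrality gives `p —w→ q`; reading powers of `w` from `p` yields a chain
`z 0 = p, z 1 = q, …` with increasing safe languages, which repeats in a finite automaton.
A repetition makes two consecutive links language-equivalent, hence equal by safe minimality,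
and then `w^n` followed by a way back to `p` resolves `q`. -/
lemma exists_loop_resolves_of_runsLE [Finite Q] (hcons : A.Consistent) (hnorm : A.NormalForm)
    (hcent : A.Centralised) (hmin : A.SafeMinimal) {p q : Q} (hx : 2 ≤ A.layer p)
    (hs : A.IsSibling p q) (hle : A.RunsLE p q) :
    ∃ u, A.runList p u = some p ∧ A.Resolves p q u := by
  obtain ⟨⟨w, hw⟩, -⟩ := hcent p q hx hs.1 hs.2.symm (hle.safeLE hs.1)
  let pow : ℕ → List α := fun n => (List.replicate n w).flatten
  have hpow : ∀ n, pow (n + 1) = w ++ pow n := fun n => by simp [pow, List.replicate_succ]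
  have halive : ∀ n, ∃ z, A.runList p (pow n) = some z := by
    intro n
    induction n with
    | zero => exact ⟨p, rfl⟩
    | succ n ih =>
      obtain ⟨z, hz⟩ := ih
      rw [hpow, A.runList_append_of_eq_some hw]
      exact Option.isSome_iff_exists.mp (hle _ (by rw [hz]; rfl))
  choose z hz using halive
  have hzq : ∀ n, A.runList q (pow n) = some (z (n + 1)) := fun n => by
    rw [← hz (n + 1), hpow, A.runList_append_of_eq_some hw]
  have hchain : ∀ m n, m ≤ n → A.RunsLE (z m) (z n) := fun m n hmn => by
    induction n, hmn using Nat.le_induction with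
    | base => exact fun _ h => h
    | succ n _ ih => exact ih.trans (hle.runList (hz n) (hzq n))
  obtain ⟨m, n, hmn, hzmn⟩ :=
    Set.finite_univ.exists_lt_map_eq_of_forall_mem (f := z) fun _ => Set.mem_univ _
  have hzm : A.IsSibling (z m) (z (m + 1)) := hs.runList hx (hz m) (hzq m)
  have hlm : A.layer (z m) = A.layer p := A.layer_runList (hz m)
  have heq : z m = z (m + 1) :=
    eq_of_runsLE_of_runsLE hcons hmin (hlm ▸ hx) hzm (hchain m (m + 1) m.le_succ)
      (hzmn ▸ hchain (m + 1) n hmn)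
  obtain ⟨v, -, hv⟩ := (hnorm p hx).1 _ _ (hz m)
  refine ⟨pow m ++ v, by rwa [A.runList_append_of_eq_some (hz m)], Or.inl ?_⟩
  rwa [A.runList_append_of_eq_some (hzq m), ← heq]

lemma exists_loop_resolves_sibling [Finite Q] (hcons : A.Consistent) (hnorm : A.NormalForm)
    (hcent : A.Centralised) (hmin : A.SafeMinimal) {p q : Q} (hx : 2 ≤ A.layer p)
    (hs : A.IsSibling p q) : ∃ u, A.runList p u = some p ∧ A.Resolves p q u := by
  by_cases hle : A.RunsLE p q
  · exact exists_loop_resolves_of_runsLE hcons hnorm hcent hmin hx hs hle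
  · obtain ⟨u, hu, hqu⟩ : ∃ u, (A.runList p u).isSome ∧ A.runList q u = none := by
      simpa [RunsLE] using hle
    obtain ⟨t, ht⟩ := Option.isSome_iff_exists.mp hu
    obtain ⟨r, -, hr⟩ := (hnorm p hx).1 u t ht
    exact ⟨u ++ r, by rwa [A.runList_append_of_eq_some ht],
      Or.inr (A.runList_append_of_eq_none hqu r)⟩

lemma exists_loop_kills_siblingChild [Finite Q] (hcons : A.Consistent) (hnorm : A.NormalForm)
    (hcent : A.Centralised) (hmin : A.SafeMinimal) {p g : Q} (hx : 2 ≤ A.layer p)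
    (hg : A.IsSiblingChild p g) : ∃ u, A.runList p u = some p ∧ A.runList g u = none := by
  have hgl := hg.1
  have hg1 : 1 < A.layer g := by omega
  have hs : A.IsSibling p (A.μ g) :=
    ⟨by have := A.μ_layer g hg1; omega,
      by rw [A.muHat_mu hg1 (by omega)]; exact hg.2⟩
  obtain ⟨u, hu, hres⟩ := exists_loop_resolves_sibling hcons hnorm hcent hmin hx hs
  cases hgu : A.runList g u with
  | none => exact ⟨u, hu, hgu⟩
  | some g' =>
    have hmu := A.runList_mu hgu hg1
    rcases hres with h | h <;> rw [h] at hmu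
    · obtain ⟨v, hv, hg'v⟩ := exists_loop_kills_child hnorm hx
        (by rw [A.layer_runList hgu]; exact hg1) (Option.some_inj.mp hmu).symm
      exact ⟨u ++ v, by rwa [A.runList_append_of_eq_some hu],
        by rwa [A.runList_append_of_eq_some hgu]⟩
    · cases hmu

lemma exists_loop_resolves_forall [Finite Q] {p : Q} {S : Set Q}
    (hS : ∀ q ∈ S, ∀ u q', A.runList p u = some p → A.runList q u = some q' → q' ∈ S)
    (h : ∀ q ∈ S, ∃ u, A.runList p u = some p ∧ A.Resolves p q u) :
    ∃ u, A.runList p u = some p ∧ ∀ q ∈ S, A.Resolves p q u := by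
  suffices ∀ F : Finset Q, (∀ q ∈ F, q ∈ S) →
      ∃ u, A.runList p u = some p ∧ ∀ q ∈ F, A.Resolves p q u by
    obtain ⟨u, hu, hres⟩ := this (Set.toFinite S).toFinset fun q => (Set.Finite.mem_toFinset _).mp
    exact ⟨u, hu, fun q hq => hres q ((Set.Finite.mem_toFinset _).mpr hq)⟩
  intro F hF
  induction F using Finset.induction_on with
  | empty => exact ⟨[], rfl, by simp⟩
  | insert g F _ ih =>
    obtain ⟨u, hu, hres⟩ := ih fun q hq => hF q (Finset.mem_insert_of_mem hq)
    obtain ⟨v, hv, hg⟩ : ∃ v, A.runList p v = some p ∧ A.Resolves p g (u ++ v) := by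
      cases hgu : A.runList g u with
      | none => exact ⟨[], rfl, Or.inr (A.runList_append_of_eq_none hgu _)⟩
      | some g' =>
        obtain ⟨v, hv, hres'⟩ := h g' (hS g (hF g (Finset.mem_insert_self g F)) u g' hu hgu)
        exact ⟨v, hv, by rwa [Resolves, A.runList_append_of_eq_some hgu]⟩
    refine ⟨u ++ v, by rwa [A.runList_append_of_eq_some hu], fun q hq => ?_⟩
    rcases Finset.mem_insert.mp hq with rfl | hq
    · exact hg
    · exact (hres q hq).append_loop hv

lemma exists_loop_resolves_siblings_and_children [Finite Q] (hcons : A.Consistent)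
    (hnorm : A.NormalForm) (hcent : A.Centralised) (hmin : A.SafeMinimal) {p : Q}
    (hx : 2 ≤ A.layer p) : ∃ u, A.runList p u = some p ∧
      ∀ q, A.IsSibling p q ∨ A.IsSiblingChild p q → A.Resolves p q u :=
  exists_loop_resolves_forall (S := {q | A.IsSibling p q ∨ A.IsSiblingChild p q})
    (fun _ hq _ _ hu hq' =>
      hq.imp (fun hs => hs.runList hx hu hq') (fun hg => hg.runList hx hu hq'))
    (fun _ hq => hq.elim (exists_loop_resolves_sibling hcons hnorm hcent hmin hx)
      fun hg => (exists_loop_kills_siblingChild hcons hnorm hcent hmin hx hg).imp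
        fun _ h => ⟨h.1, Or.inr h.2⟩)

end CentralSequences

end Layered

theorem statement_12_general {Q α : Type} [Fintype Q] {d : ℕ}
    (A : Layered Q α d) (hcons : A.Consistent) (hnorm : A.NormalForm)
    (hcent : A.Centralised) (hmin : A.SafeMinimal) :
    ∀ p : Q, 2 ≤ A.layer p → ∃ z : List α, A.IsCentralSeq p z := by
  intro p hx
  obtain ⟨u, hu, hres⟩ :=
    Layered.exists_loop_resolves_siblings_and_children hcons hnorm hcent hmin hx
  obtain ⟨v, hv, hvp⟩ := (hnorm p hx).1 u p hu
  refine ⟨u ++ v, by simp [hv], by rwa [A.runList_append_of_eq_some hu],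
    fun q hq hqp => (hres q (Or.inl ⟨hq, hqp⟩)).append_loop hvp, fun g hg hgp => ?_⟩
  rcases (hres g (Or.inr ⟨hg, hgp⟩)).append_loop hvp with h | h
  · have := A.layer_runList h
    omega
  · exact h

/-- In a consistent layered automaton that is in normal form,
centralised and safe minimal, every state of a layer `x ≥ 2` admits a central sequence. -/
theorem statement_12 {Q α : Type} [Fintype Q] [Fintype α] [Nonempty α] {d : ℕ}
    (A : Layered Q α d) (hcons : A.Consistent) (hnorm : A.NormalForm)
    (hcent : A.Centralised) (hmin : A.SafeMinimal) :
    ∀ p : Q, 2 ≤ A.layer p → ∃ z : List α, A.IsCentralSeq p z :=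
  statement_12_general A hcons hnorm hcent hmin
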